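/- arXiv:1707.00830 — 2 statements merged into one kernel-verified Lean document; each statement's English description precedes it below -/
import Mathlib

section
/- Suppose a symmetric bilinear form S on a real inner product space satisfies S(Y, W + hW) = 2nk⟪Y, W+hW⟫ + 2(2n-2+μ)⟪hY, W+hW⟫ for all Y, W, where h is self-adjoint with h² = (k-1)φ², φ²X = -X + η(X)ξ, hξ = 0, η(X)=⟪X,ξ⟫, η(ξ)=1, and k ≠ 0. Then kS(Y,W) = 2nk²⟪Y,W⟫ + 2k(2n-2+μ)⟪hY,W⟫ - 2(k-1)(2n-2+μ)η(W)η(hY) for all Y, W. -/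
/-!
Put `c = 2n - 2 + μ` and `T(Y, W) = S(Y, W) - 2nk⟪Y, W⟫ - 2c⟪hY, W⟫`. The hypothesis says that
`T(Y, ·)` vanishes on the range of `1 + h`, hence also on the range of `(1 - h)(1 + h) = 1 - h²`.
Since `1 - h² = k - (k - 1) η(·) ξ` with `η = ⟪·, ξ⟫` and `ξ = (1 + h) ξ`, this gives
`k T(Y, W) = 0`. The extra term `η(W) η(hY)` of the conclusion vanishes because
`η(hY) = ⟪Y, hξ⟫ = 0`.
-/

theorem smul_apply_eq_zero_of_apply_add_eq_zero {R V M : Type*} [CommRing R]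
    [AddCommGroup V] [Module R V] [AddCommGroup M] [Module R M]
    (h : V →ₗ[R] V) (B : V →ₗ[R] M) (η : V → R) (ξ : V) (k : R) (hhξ : h ξ = 0)
    (hh2 : ∀ X, h (h X) = (k - 1) • (-X + η X • ξ)) (hB : ∀ W, B (W + h W) = 0) (W : V) :
    k • B W = 0 := by
  have hBξ : B ξ = 0 := by simpa [hhξ] using hB ξ
  have hsq : B (W - h (h W)) = 0 := by
    rw [show W - h (h W) = (W + h W) - (h W + h (h W)) by abel, map_sub, hB, hB, sub_zero]
  rw [hh2, show W - (k - 1) • (-W + η W • ξ) = k • W - ((k - 1) * η W) • ξ by module]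
    at hsq
  simpa [hBξ] using hsq

theorem stmt_7_general {V : Type*} [NormedAddCommGroup V] [InnerProductSpace ℝ V]
    (ξ : V)
    (h : V →ₗ[ℝ] V)
    (hsym : ∀ x y : V, (inner ℝ (h x) y : ℝ) = inner ℝ x (h y))
    (hhξ : h ξ = 0)
    (n : ℕ) (k μ : ℝ)
    (hh2 : ∀ X : V, h (h X) = (k - 1) • (-X + (inner ℝ X ξ : ℝ) • ξ))
    (S : V →ₗ[ℝ] V →ₗ[ℝ] ℝ)
    (hyp : ∀ Y W : V, S Y (W + h W) =
      2 * n * k * (inner ℝ Y (W + h W) : ℝ)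
        + 2 * (2 * n - 2 + μ) * (inner ℝ (h Y) (W + h W) : ℝ)) :
    ∀ Y W : V, k * S Y W =
      2 * n * k ^ 2 * (inner ℝ Y W : ℝ)
        + 2 * k * (2 * n - 2 + μ) * (inner ℝ (h Y) W : ℝ)
        - 2 * (k - 1) * (2 * n - 2 + μ) * (inner ℝ W ξ : ℝ) * (inner ℝ (h Y) ξ : ℝ) := by
  intro Y W
  set T : V →ₗ[ℝ] V →ₗ[ℝ] ℝ :=
    S - (2 * n * k : ℝ) • innerₗ V - (2 * (2 * n - 2 + μ) : ℝ) • (innerₗ V).comp h with hT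
  have hTY : ∀ W, T Y (W + h W) = 0 := fun W => by
    simp only [hT, LinearMap.sub_apply, LinearMap.smul_apply, LinearMap.comp_apply,
      innerₗ_apply_apply, smul_eq_mul, hyp]
    ring
  have hkT := smul_apply_eq_zero_of_apply_add_eq_zero h (T Y) (inner ℝ · ξ) ξ k hhξ hh2 hTY W
  have hhYξ : (inner ℝ (h Y) ξ : ℝ) = 0 := by rw [hsym, hhξ, inner_zero_right]
  simp only [hT, LinearMap.sub_apply, LinearMap.smul_apply, LinearMap.comp_apply,
    innerₗ_apply_apply, smul_eq_mul] at hkT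
  rw [hhYξ]
  linear_combination hkT

theorem stmt_7 {V : Type*} [NormedAddCommGroup V] [InnerProductSpace ℝ V]
    (ξ : V) (hξ : ‖ξ‖ = 1)
    (φ h : V →ₗ[ℝ] V)
    (hsym : ∀ x y : V, (inner ℝ (h x) y : ℝ) = inner ℝ x (h y))
    (hhξ : h ξ = 0) (hφξ : φ ξ = 0)
    (hφ2 : ∀ X : V, φ (φ X) = -X + (inner ℝ X ξ : ℝ) • ξ)
    (n : ℕ) (k μ : ℝ) (hk : k ≠ 0)
    (hh2 : ∀ X : V, h (h X) = (k - 1) • (-X + (inner ℝ X ξ : ℝ) • ξ))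
    (S : V →ₗ[ℝ] V →ₗ[ℝ] ℝ)
    (hSsym : ∀ X Y : V, S X Y = S Y X)
    (hyp : ∀ Y W : V, S Y (W + h W) =
      2 * n * k * (inner ℝ Y (W + h W) : ℝ)
        + 2 * (2 * n - 2 + μ) * (inner ℝ (h Y) (W + h W) : ℝ)) :
    ∀ Y W : V, k * S Y W =
      2 * n * k ^ 2 * (inner ℝ Y W : ℝ)
        + 2 * k * (2 * n - 2 + μ) * (inner ℝ (h Y) W : ℝ)
        - 2 * (k - 1) * (2 * n - 2 + μ) * (inner ℝ W ξ : ℝ) * (inner ℝ (h Y) ξ : ℝ) :=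
  stmt_7_general ξ h hsym hhξ n k μ hh2 S hyp
end

section
/- Let V be a real inner product space with unit vector ξ, η(X)=⟪X,ξ⟫, and φ, h : V →ₗ[ℝ] V with φξ=0, hξ=0, hφ = -φh, h self-adjoint, φ²X = -X+η(X)ξ, and ⟪φX, φY⟫ = ⟪X,Y⟫ - η(X)η(Y). If a bilinear form S satisfies S(Y, φW + φhW) = 2nk⟪Y, φW + φhW⟫ for all Y, W, and S(φX,φY) = S(X,Y) - 2nkη(X)η(Y) - 2(2n-2+μ)⟪hX,Y⟫, then replacing Y by φY yields S(Y, W + hW) = 2nk⟪Y, W+hW⟫ + 2(2n-2+μ)⟪hY, W+hW⟫ for all Y, W. -/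
theorem bilin_eq_inner_add_inner_of_phi_phi {V : Type*} [NormedAddCommGroup V]
    [InnerProductSpace ℝ V] (ξ : V) (φ h : V →ₗ[ℝ] V)
    (hφg : ∀ X Y : V,
      (inner ℝ (φ X) (φ Y) : ℝ) = (inner ℝ X Y : ℝ) - (inner ℝ X ξ : ℝ) * (inner ℝ Y ξ : ℝ))
    (S : V →ₗ[ℝ] V →ₗ[ℝ] ℝ) (c d : ℝ)
    (hS : ∀ X Y : V, S (φ X) (φ Y) =
      S X Y - c * (inner ℝ X ξ : ℝ) * (inner ℝ Y ξ : ℝ) - d * (inner ℝ (h X) Y : ℝ))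
    {Y Z : V} (hYZ : S (φ Y) (φ Z) = c * (inner ℝ (φ Y) (φ Z) : ℝ)) :
    S Y Z = c * (inner ℝ Y Z : ℝ) + d * (inner ℝ (h Y) Z : ℝ) := by
  have hSYZ := hS Y Z
  rw [hYZ, hφg] at hSYZ
  linarith

theorem stmt_14_general {V : Type*} [NormedAddCommGroup V] [InnerProductSpace ℝ V]
    (ξ : V)
    (φ h : V →ₗ[ℝ] V)
    (hφg : ∀ X Y : V,
      (inner ℝ (φ X) (φ Y) : ℝ) = (inner ℝ X Y : ℝ) - (inner ℝ X ξ : ℝ) * (inner ℝ Y ξ : ℝ))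
    (S : V →ₗ[ℝ] V →ₗ[ℝ] ℝ)
    (n : ℕ) (k μ : ℝ)
    (hyp1 : ∀ Y W : V,
      S Y (φ W + φ (h W)) = 2 * n * k * (inner ℝ Y (φ W + φ (h W)) : ℝ))
    (hyp2 : ∀ X Y : V, S (φ X) (φ Y) =
      S X Y - 2 * n * k * (inner ℝ X ξ : ℝ) * (inner ℝ Y ξ : ℝ)
        - 2 * (2 * n - 2 + μ) * (inner ℝ (h X) Y : ℝ)) :
    ∀ Y W : V, S Y (W + h W) =
      2 * n * k * (inner ℝ Y (W + h W) : ℝ)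
        + 2 * (2 * n - 2 + μ) * (inner ℝ (h Y) (W + h W) : ℝ) := by
  intro Y W
  have hφY := hyp1 (φ Y) W
  rw [← map_add] at hφY
  exact bilin_eq_inner_add_inner_of_phi_phi ξ φ h hφg S _ _ hyp2 hφY

theorem stmt_14 {V : Type*} [NormedAddCommGroup V] [InnerProductSpace ℝ V]
    (ξ : V) (hξ : ‖ξ‖ = 1)
    (φ h : V →ₗ[ℝ] V)
    (hφξ : φ ξ = 0) (hhξ : h ξ = 0)
    (hanticomm : ∀ X : V, h (φ X) = -φ (h X))
    (hsym : ∀ x y : V, (inner ℝ (h x) y : ℝ) = inner ℝ x (h y))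
    (hφ2 : ∀ X : V, φ (φ X) = -X + (inner ℝ X ξ : ℝ) • ξ)
    (hφg : ∀ X Y : V,
      (inner ℝ (φ X) (φ Y) : ℝ) = (inner ℝ X Y : ℝ) - (inner ℝ X ξ : ℝ) * (inner ℝ Y ξ : ℝ))
    (S : V →ₗ[ℝ] V →ₗ[ℝ] ℝ)
    (n : ℕ) (k μ : ℝ)
    (hyp1 : ∀ Y W : V,
      S Y (φ W + φ (h W)) = 2 * n * k * (inner ℝ Y (φ W + φ (h W)) : ℝ))
    (hyp2 : ∀ X Y : V, S (φ X) (φ Y) =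
      S X Y - 2 * n * k * (inner ℝ X ξ : ℝ) * (inner ℝ Y ξ : ℝ)
        - 2 * (2 * n - 2 + μ) * (inner ℝ (h X) Y : ℝ)) :
    ∀ Y W : V, S Y (W + h W) =
      2 * n * k * (inner ℝ Y (W + h W) : ℝ)
        + 2 * (2 * n - 2 + μ) * (inner ℝ (h Y) (W + h W) : ℝ) :=
  stmt_14_general ξ φ h hφg S n k μ hyp1 hyp2
end
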